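/- arXiv:1209.0939 — 2 statements merged into one kernel-verified Lean document; each statement's English description precedes it below -/
import Mathlib

section
/- Fix real numbers α, β with 0 ≤ α < β ≤ 2π. For a natural number n, let I_n = { r·e^{iθ} ∈ ℂ : α ≤ θ ≤ β and e^{-(n+1)} ≤ 1 − r ≤ e^{-n} } (a sector of a thin annulus inside the unit disc). Then there exist δ > 0 and N_0 ∈ ℕ such that for all n ≥ N_0, the integral of the function z ↦ (1 − |z|²)^{−2} over I_n with respect to the Lebesgue measure on ℂ ≅ ℝ² is at least δ · e^n. (This integral is the hyperbolic area of I_n for the Poincaré metric on the unit disc.) -/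
/-!
In polar coordinates `I_n` is the image of `[a, b] × [α, β]` with `a = 1 - e^{-n}` and
`b = 1 - e^{-(n+1)}`. On it the density `(1 - |z|²)⁻²` is at least
`(2 (1 - a))⁻² = e^{2n} / 4`.
Its Euclidean area is at least `κ a (b - a)`, where `κ > 0` is the length of an angular interval
inside the chart `(-π, π)` whose points are congruent mod `2π` to points of `[α, β]`; since
`b - a = e^{-n} (1 - e^{-1})` and `a ≥ 1/2`, the product is of order `e^n`.
-/

open MeasureTheory Set

namespace Complex

theorem polarCoord_symm_eq_mul_exp (p : ℝ × ℝ) :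
    Complex.polarCoord.symm p = p.1 * exp (p.2 * I) := by
  rw [Complex.polarCoord_symm_apply, exp_mul_I, ← ofReal_cos, ← ofReal_sin]

theorem continuous_polarCoord_symm : Continuous Complex.polarCoord.symm := by
  simp_rw [funext polarCoord_symm_eq_mul_exp]
  fun_prop

theorem polarCoord_symm_add_two_pi (r θ : ℝ) :
    Complex.polarCoord.symm (r, θ + 2 * Real.pi) = Complex.polarCoord.symm (r, θ) := by
  simp

theorem volume_polarCoord_symm_image {s : Set (ℝ × ℝ)} (hs : MeasurableSet s)
    (hst : s ⊆ polarCoord.target) :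
    volume (Complex.polarCoord.symm '' s) = ∫⁻ p in s, ENNReal.ofReal p.1 := by
  have himage : Complex.polarCoord.symm '' s =
      measurableEquivRealProd ⁻¹' (polarCoord.symm '' s) := by
    rw [← measurableEquivRealProd.image_symm, image_image]; rfl
  rw [himage, volume_preserving_equiv_real_prod.measure_preimage_equiv, ← setLIntegral_one,
    lintegral_image_eq_lintegral_abs_det_fderiv_mul volume hs
      (fun p _ ↦ (hasFDerivAt_polarCoord_symm p).hasFDerivWithinAt)
      (polarCoord.symm.injOn.mono hst)]
  refine setLIntegral_congr_fun hs fun p hp ↦ ?_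
  rw [det_fderivPolarCoordSymm, mul_one, abs_of_pos (hst hp).1]

theorem ofReal_mul_volume_le_volume_polarCoord_symm_image {s : Set (ℝ × ℝ)} {a : ℝ}
    (hs : MeasurableSet s) (hst : s ⊆ polarCoord.target) (ha : ∀ p ∈ s, a ≤ p.1) :
    ENNReal.ofReal a * volume s ≤ volume (Complex.polarCoord.symm '' s) := by
  rw [volume_polarCoord_symm_image hs hst, ← setLIntegral_const]
  exact setLIntegral_mono' hs fun p hp ↦ ENNReal.ofReal_le_ofReal (ha p hp)

end Complex

theorem inv_two_mul_one_sub_sq_le_inv_one_sub_sq_sq {a r : ℝ} (hr₀ : 0 ≤ r) (hr₁ : r < 1)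
    (har : a ≤ r) : ((2 * (1 - a)) ^ 2)⁻¹ ≤ ((1 - r ^ 2) ^ 2)⁻¹ := by
  have hpos : 0 < 1 - r ^ 2 := by nlinarith
  exact inv_anti₀ (by positivity) (pow_le_pow_left₀ hpos.le (by nlinarith) 2)

theorem integrableOn_inv_one_sub_norm_sq_sq_closedBall {E : Type*} [NormedAddCommGroup E]
    [ProperSpace E] [MeasurableSpace E] [OpensMeasurableSpace E] (μ : Measure E)
    [IsFiniteMeasureOnCompacts μ] {ρ : ℝ} (hρ : ρ < 1) :
    IntegrableOn (fun z : E ↦ ((1 - ‖z‖ ^ 2) ^ 2)⁻¹) (Metric.closedBall 0 ρ) μ := by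
  refine ContinuousOn.integrableOn_compact (isCompact_closedBall 0 ρ) ?_
  refine ContinuousOn.inv₀ (by fun_prop) fun z hz ↦ ?_
  have hz1 : ‖z‖ < 1 := (mem_closedBall_zero_iff.1 hz).trans_lt hρ
  have hpos : 0 < 1 - ‖z‖ ^ 2 := by nlinarith [norm_nonneg z]
  positivity

theorem setOf_eq_polarCoord_symm_image (ε₁ ε₂ α β : ℝ) :
    {z : ℂ | ∃ r θ : ℝ, α ≤ θ ∧ θ ≤ β ∧ ε₁ ≤ 1 - r ∧ 1 - r ≤ ε₂ ∧
        z = (r : ℂ) * Complex.exp (θ * Complex.I)} =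
      Complex.polarCoord.symm '' (Icc (1 - ε₂) (1 - ε₁) ×ˢ Icc α β) := by
  ext z
  simp only [mem_ofPred_eq, mem_image, mem_prod, mem_Icc, Prod.exists,
    Complex.polarCoord_symm_eq_mul_exp]
  constructor
  · rintro ⟨r, θ, hα, hβ, h₁, h₂, rfl⟩
    exact ⟨r, θ, ⟨⟨by linarith, by linarith⟩, hα, hβ⟩, rfl⟩
  · rintro ⟨r, θ, ⟨⟨h₁, h₂⟩, hα, hβ⟩, rfl⟩
    exact ⟨r, θ, hα, hβ, by linarith, by linarith, rfl⟩

open Real in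
theorem exists_Ioo_subset_Ioo_neg_pi_pi_mod_two_pi_mem_Icc {α β : ℝ} (h0 : 0 ≤ α)
    (hαβ : α < β) (hβ : β ≤ 2 * π) :
    ∃ c d, c < d ∧ Ioo c d ⊆ Ioo (-π) π ∧
      ∀ θ ∈ Ioo c d, θ ∈ Icc α β ∨ θ + 2 * π ∈ Icc α β := by
  rcases lt_or_ge α π with hα | hα
  · refine ⟨α, min β π, lt_min hαβ hα,
      Ioo_subset_Ioo (by linarith [pi_pos]) (min_le_right _ _),
      fun θ hθ ↦ .inl ⟨hθ.1.le, hθ.2.le.trans (min_le_left _ _)⟩⟩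
  · refine ⟨α - 2 * π, β - 2 * π, by linarith, Ioo_subset_Ioo (by linarith) (by linarith),
      fun θ hθ ↦ .inr ⟨by linarith [hθ.1], by linarith [hθ.2]⟩⟩

open Real in
theorem exists_pos_mul_le_volume_polarCoord_symm_image {α β : ℝ} (h0 : 0 ≤ α)
    (hαβ : α < β) (hβ : β ≤ 2 * π) :
    ∃ κ > 0, ∀ a b : ℝ, 0 ≤ a → a ≤ b →
      ENNReal.ofReal (κ * a * (b - a)) ≤
        volume (Complex.polarCoord.symm '' (Icc a b ×ˢ Icc α β)) := by
  obtain ⟨c, d, hcd, hcdπ, hangle⟩ :=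
    exists_Ioo_subset_Ioo_neg_pi_pi_mod_two_pi_mem_Icc h0 hαβ hβ
  refine ⟨d - c, sub_pos.2 hcd, fun a b ha hab ↦ ?_⟩
  have hsub : Ioo a b ×ˢ Ioo c d ⊆ polarCoord.target := fun p hp ↦
    ⟨ha.trans_lt hp.1.1, hcdπ hp.2⟩
  have himage : Complex.polarCoord.symm '' (Ioo a b ×ˢ Ioo c d) ⊆
      Complex.polarCoord.symm '' (Icc a b ×ˢ Icc α β) := by
    rintro _ ⟨⟨r, θ⟩, ⟨hr, hθ⟩, rfl⟩
    rcases hangle θ hθ with h | h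
    · exact ⟨(r, θ), ⟨Ioo_subset_Icc_self hr, h⟩, rfl⟩
    · exact ⟨(r, θ + 2 * π), ⟨Ioo_subset_Icc_self hr, h⟩,
        Complex.polarCoord_symm_add_two_pi r θ⟩
  calc ENNReal.ofReal ((d - c) * a * (b - a))
      = ENNReal.ofReal a * volume (Ioo a b ×ˢ Ioo c d) := by
        rw [Measure.volume_eq_prod, Measure.prod_prod, Real.volume_Ioo, Real.volume_Ioo,
          ← ENNReal.ofReal_mul (sub_nonneg.2 hab), ← ENNReal.ofReal_mul ha]
        ring_nf
    _ ≤ _ := Complex.ofReal_mul_volume_le_volume_polarCoord_symm_image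
        (measurableSet_Ioo.prod measurableSet_Ioo) hsub fun p hp ↦ hp.1.1.le
    _ ≤ _ := measure_mono himage

open Real in
theorem exists_pos_mul_le_setIntegral_inv_one_sub_norm_sq_sq {α β : ℝ} (h0 : 0 ≤ α)
    (hαβ : α < β) (hβ : β ≤ 2 * π) :
    ∃ κ > 0, ∀ a b : ℝ, 0 ≤ a → a ≤ b → b < 1 →
      ((2 * (1 - a)) ^ 2)⁻¹ * (κ * a * (b - a)) ≤
        ∫ z in Complex.polarCoord.symm '' (Icc a b ×ˢ Icc α β),
          ((1 - ‖z‖ ^ 2) ^ 2)⁻¹ := by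
  obtain ⟨κ, hκ, hvol⟩ := exists_pos_mul_le_volume_polarCoord_symm_image h0 hαβ hβ
  refine ⟨κ, hκ, fun a b ha hab hb ↦ ?_⟩
  set S := Complex.polarCoord.symm '' (Icc a b ×ˢ Icc α β)
  have hS : IsCompact S :=
    (isCompact_Icc.prod isCompact_Icc).image Complex.continuous_polarCoord_symm
  have hnorm : ∀ p ∈ Icc a b ×ˢ Icc α β, ‖Complex.polarCoord.symm p‖ = p.1 := by
    intro p hp
    rw [Complex.norm_polarCoord_symm, abs_of_nonneg (ha.trans hp.1.1)]
  have hSball : S ⊆ Metric.closedBall 0 b := by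
    rintro _ ⟨p, hp, rfl⟩
    rw [mem_closedBall_zero_iff, hnorm p hp]
    exact hp.1.2
  have hbound : ∀ z ∈ S, ((2 * (1 - a)) ^ 2)⁻¹ ≤ ((1 - ‖z‖ ^ 2) ^ 2)⁻¹ := by
    rintro _ ⟨p, hp, rfl⟩
    rw [hnorm p hp]
    exact inv_two_mul_one_sub_sq_le_inv_one_sub_sq_sq (ha.trans hp.1.1) (hp.1.2.trans_lt hb)
      hp.1.1
  calc ((2 * (1 - a)) ^ 2)⁻¹ * (κ * a * (b - a))
      ≤ ((2 * (1 - a)) ^ 2)⁻¹ * volume.real S := by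
        gcongr
        rw [measureReal_def, ← ENNReal.ofReal_le_iff_le_toReal hS.measure_lt_top.ne]
        exact hvol a b ha hab
    _ ≤ _ := setIntegral_ge_of_const_le_real hS.measurableSet hS.measure_lt_top.ne hbound
        ((integrableOn_inv_one_sub_norm_sq_sq_closedBall volume hb).mono_set hSball)

theorem hyperbolic_area_annulus_sector (α β : ℝ) (h0 : 0 ≤ α) (hαβ : α < β)
    (hβ : β ≤ 2 * Real.pi) :
    ∃ (δ : ℝ) (N₀ : ℕ), 0 < δ ∧ ∀ n : ℕ, N₀ ≤ n →
      δ * Real.exp n ≤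
        ∫ z in {z : ℂ | ∃ r θ : ℝ, α ≤ θ ∧ θ ≤ β ∧
            Real.exp (-(n + 1 : ℝ)) ≤ 1 - r ∧ 1 - r ≤ Real.exp (-(n : ℝ)) ∧
            z = (r : ℂ) * Complex.exp (θ * Complex.I)},
          ((1 - ‖z‖ ^ 2) ^ 2)⁻¹ := by
  obtain ⟨κ, hκ, harea⟩ := exists_pos_mul_le_setIntegral_inv_one_sub_norm_sq_sq h0 hαβ hβ
  have he : Real.exp (-1) ≤ 1 / 2 := by
    rw [Real.exp_neg, one_div]
    exact inv_anti₀ two_pos (by linarith [Real.add_one_le_exp 1])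
  set e := Real.exp (-1)
  have he₀ : 0 < e := Real.exp_pos _
  refine ⟨κ * (1 - e) / 8, 1, by nlinarith, fun n hn ↦ ?_⟩
  set x := Real.exp (-(n : ℝ))
  have hx : 0 < x := Real.exp_pos _
  have hxe : x ≤ e := Real.exp_le_exp.2 (by simpa using hn)
  have hxn : Real.exp n = x⁻¹ := by simp only [x, Real.exp_neg, inv_inv]
  have hxe' : Real.exp (-(n + 1 : ℝ)) = x * e := by rw [← Real.exp_add]; ring_nf
  rw [setOf_eq_polarCoord_symm_image, hxe']
  refine le_trans ?_ (harea _ _ (by linarith) (by nlinarith) (by nlinarith))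
  have hκe : 0 < κ * (1 - e) := by nlinarith
  calc κ * (1 - e) / 8 * Real.exp n
      ≤ κ * (1 - e) * (1 - x) / 4 * x⁻¹ := by
        rw [hxn]
        exact mul_le_mul_of_nonneg_right (by nlinarith) (inv_nonneg.2 hx.le)
    _ = ((2 * (1 - (1 - x))) ^ 2)⁻¹ * (κ * (1 - x) * (1 - x * e - (1 - x))) := by
        rw [sub_sub_cancel]
        field_simp
        ring
end

section
/- Let Γ be a subgroup of SL(2,ℝ) acting on the upper half-plane ℍ by Möbius transformations. Suppose there is a compact subset K of ℍ such that ℍ = ⋃_{γ ∈ Γ} γ·K, and suppose the set S = { γ ∈ Γ : γ·K ∩ K ≠ ∅ } is finite and generates Γ. Let l : Γ → ℕ be the word length with respect to S. Let r : ℍ → Γ be any map such that x ∈ r(x)·K for every x ∈ ℍ. Then there exist real numbers λ ≥ 1 and C ≥ 0 such that for all x, y ∈ ℍ: l(r(y)^{-1} r(x))/λ − C ≤ d(x,y) ≤ λ · l(r(y)^{-1} r(x)) + C, where d is the hyperbolic distance on ℍ. -/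
/-- The word length of `γ` with respect to a generating set `S`: the least `N` such that
`γ` is the product of a list of `N` elements of `S` (and `0` if no such `N` exists). -/
noncomputable def wordLength {G : Type*} [Group G] (S : Set G) (γ : G) : ℕ :=
  sInf {N : ℕ | ∃ l : List G, (∀ s ∈ l, s ∈ S) ∧ l.length = N ∧ l.prod = γ}

/-! A Švarc–Milnor argument. Every generator moves a base point `k₀ ∈ K` by at most `2 diam K`,
which bounds `d(x, y)` above by the word length. Conversely, by Baire's theorem `K` contains a
ball around some `k₀`, so, ℍ being proper, only finitely many `γ` move `k₀` a bounded distance;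
hence labels `r x`, `r y` of points at distance `≤ 1` differ by one of finitely many elements,
of bounded word length. Finally, any two points of ℍ are joined by about `d(x, y) + 5` steps of
length `≤ 1`: up the vertical geodesic to height `|Re x - Re y| + Im x + Im y`, one horizontal
step, and down again; the height is controlled through `cosh d(x, y)`. -/

open Real UpperHalfPlane Metric

section WordLength

variable {G : Type*} [Group G] {S : Set G}

theorem wordLength_le_length {l : List G} (hl : ∀ s ∈ l, s ∈ S) :
    wordLength S l.prod ≤ l.length :=
  Nat.sInf_le ⟨l, hl, rfl, rfl⟩

theorem wordLength_one : wordLength S 1 = 0 :=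
  Nat.le_zero.1 (wordLength_le_length (l := []) (by simp))

theorem exists_list_prod_eq (hsym : ∀ s ∈ S, s⁻¹ ∈ S) (hgen : Subgroup.closure S = ⊤) (g : G) :
    ∃ l : List G, (∀ s ∈ l, s ∈ S) ∧ l.prod = g := by
  have hg : g ∈ Submonoid.closure (S ∪ S⁻¹) := by
    rw [← Subgroup.closure_toSubmonoid, hgen]
    exact Subgroup.mem_top g
  obtain ⟨l, hl, rfl⟩ := Submonoid.exists_list_of_mem_closure hg
  refine ⟨l, fun s hs => ?_, rfl⟩
  rcases hl s hs with h | h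
  exacts [h, inv_inv s ▸ hsym _ h]

theorem exists_list_length_eq_wordLength (hsym : ∀ s ∈ S, s⁻¹ ∈ S)
    (hgen : Subgroup.closure S = ⊤) (g : G) :
    ∃ l : List G, (∀ s ∈ l, s ∈ S) ∧ l.length = wordLength S g ∧ l.prod = g := by
  obtain ⟨l, hl, hprod⟩ := exists_list_prod_eq hsym hgen g
  have hne : {N | ∃ l : List G, (∀ s ∈ l, s ∈ S) ∧ l.length = N ∧ l.prod = g}.Nonempty :=
    ⟨l.length, l, hl, rfl, hprod⟩
  exact Nat.sInf_mem hne

theorem wordLength_mul_le (hsym : ∀ s ∈ S, s⁻¹ ∈ S) (hgen : Subgroup.closure S = ⊤) (a b : G) :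
    wordLength S (a * b) ≤ wordLength S a + wordLength S b := by
  obtain ⟨la, hla, hlen_a, rfl⟩ := exists_list_length_eq_wordLength hsym hgen a
  obtain ⟨lb, hlb, hlen_b, rfl⟩ := exists_list_length_eq_wordLength hsym hgen b
  rw [← hlen_a, ← hlen_b, ← List.length_append, ← List.prod_append]
  exact wordLength_le_length fun s hs => (List.mem_append.1 hs).elim (hla s) (hlb s)

theorem countable_of_closure_eq_top (hS : S.Countable) (hsym : ∀ s ∈ S, s⁻¹ ∈ S)
    (hgen : Subgroup.closure S = ⊤) : Countable G := by
  have : Countable S := hS.to_subtype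
  refine Function.Surjective.countable (f := fun l : List S => (l.map Subtype.val).prod) ?_
  intro g
  obtain ⟨l, hl, rfl⟩ := exists_list_prod_eq hsym hgen g
  exact ⟨l.pmap (fun s hs => ⟨s, hs⟩) hl, by simp [List.map_pmap]⟩

end WordLength

instance Subgroup.instIsIsometricSMul {G X : Type*} [Group G] [PseudoEMetricSpace X]
    [MulAction G X] [IsIsometricSMul G X] (H : Subgroup G) : IsIsometricSMul H X :=
  ⟨fun h => isometry_smul X (h : G)⟩

theorem nonempty_interior_of_forall_exists_smul_eq {G X : Type*} [Group G] [TopologicalSpace X]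
    [BaireSpace X] [Nonempty X] [MulAction G X] [ContinuousConstSMul G X] [Countable G]
    {K : Set X} (hK : IsClosed K) (hcover : ∀ x : X, ∃ g : G, ∃ k ∈ K, g • k = x) :
    (interior K).Nonempty := by
  open scoped Pointwise in
  obtain ⟨g, hg⟩ := nonempty_interior_of_iUnion_of_closed (f := fun g : G => g • K)
    (fun g => hK.smul g) (Set.iUnion_eq_univ_iff.2 fun x => by
      obtain ⟨g, k, hk, rfl⟩ := hcover x
      exact ⟨g, Set.smul_mem_smul_set hk⟩)
  rw [interior_smul] at hg
  exact Set.smul_set_nonempty.1 hg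

theorem exists_inv_smul_mem {G X : Type*} [Group G] [MulAction G X] {K : Set X} {g : G}
    (hg : ∃ k ∈ K, g • k ∈ K) : ∃ k ∈ K, g⁻¹ • k ∈ K := by
  obtain ⟨k, hk, hgk⟩ := hg
  exact ⟨g • k, hgk, by rwa [inv_smul_smul]⟩

section IsometricAction

variable {G X : Type*} [Group G] [PseudoMetricSpace X] [MulAction G X] [IsIsometricSMul G X]

theorem dist_smul_smul_eq_dist_inv_mul_smul (g h : G) (x : X) :
    dist (g • x) (h • x) = dist ((h⁻¹ * g) • x) x := by
  rw [← dist_smul h⁻¹, smul_smul, inv_smul_smul]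

theorem dist_smul_smul_le (g h : G) (a b c d : X) :
    dist (g • a) (h • b) ≤ dist (g • c) (h • d) + dist a c + dist d b :=
  calc dist (g • a) (h • b) ≤ dist (g • a) (g • c) + dist (g • c) (h • d) + dist (h • d) (h • b) :=
        dist_triangle4 _ _ _ _
    _ = dist (g • c) (h • d) + dist a c + dist d b := by
        rw [dist_smul, dist_smul]; ring

theorem dist_list_prod_smul_le {c : ℝ} {x : X} (l : List G) (hl : ∀ s ∈ l, dist (s • x) x ≤ c) :
    dist (l.prod • x) x ≤ c * l.length := by
  induction l with
  | nil => simp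
  | cons s l ih =>
    rw [List.prod_cons, mul_smul, List.length_cons, Nat.cast_succ]
    calc dist (s • l.prod • x) x ≤ dist (s • l.prod • x) (s • x) + dist (s • x) x :=
          dist_triangle _ _ _
      _ ≤ c * l.length + c := by
          rw [dist_smul]
          exact add_le_add (ih fun t ht => hl t (List.mem_cons_of_mem s ht))
            (hl s List.mem_cons_self)
      _ = c * (l.length + 1) := by ring

theorem dist_smul_le_mul_wordLength {S : Set G} (hsym : ∀ s ∈ S, s⁻¹ ∈ S)
    (hgen : Subgroup.closure S = ⊤) {c : ℝ} {x : X} (hc : ∀ s ∈ S, dist (s • x) x ≤ c) (g : G) :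
    dist (g • x) x ≤ c * wordLength S g := by
  obtain ⟨l, hl, hlen, rfl⟩ := exists_list_length_eq_wordLength hsym hgen g
  rw [← hlen]
  exact dist_list_prod_smul_le l fun s hs => hc s (hl s hs)

theorem dist_smul_le_two_mul_diam {K : Set X} (hK : Bornology.IsBounded K) {g : G} {x : X}
    (hx : x ∈ K) (hg : ∃ k ∈ K, g • k ∈ K) : dist (g • x) x ≤ 2 * diam K := by
  obtain ⟨k, hk, hgk⟩ := hg
  calc dist (g • x) x ≤ dist (g • x) (g • k) + dist (g • k) x := dist_triangle _ _ _
    _ ≤ diam K + diam K := by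
        rw [dist_smul]
        exact add_le_add (dist_le_diam_of_mem hK hx hk) (dist_le_diam_of_mem hK hgk hx)
    _ = 2 * diam K := by ring

theorem dist_le_two_mul_diam_mul_wordLength_add {K : Set X} (hK : Bornology.IsBounded K)
    {S : Set G} (hSK : ∀ s ∈ S, ∃ k ∈ K, s • k ∈ K) (hsym : ∀ s ∈ S, s⁻¹ ∈ S)
    (hgen : Subgroup.closure S = ⊤) {k₀ : X} (hk₀ : k₀ ∈ K) {r : X → G}
    (hr : ∀ x, ∃ k ∈ K, r x • k = x) (x y : X) :
    dist x y ≤ 2 * diam K * wordLength S ((r y)⁻¹ * r x) + 2 * diam K := by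
  obtain ⟨kx, hkx, hx⟩ := hr x
  obtain ⟨ky, hky, hy⟩ := hr y
  calc dist x y ≤ dist (r x • k₀) (r y • k₀) + dist kx k₀ + dist k₀ ky := by
        simpa only [hx, hy] using dist_smul_smul_le (r x) (r y) kx ky k₀ k₀
    _ ≤ 2 * diam K * wordLength S ((r y)⁻¹ * r x) + diam K + diam K := by
        rw [dist_smul_smul_eq_dist_inv_mul_smul]
        gcongr
        · exact dist_smul_le_mul_wordLength hsym hgen
            (fun s hs => dist_smul_le_two_mul_diam hK hk₀ (hSK s hs)) _
        · exact dist_le_diam_of_mem hK hkx hk₀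
        · exact dist_le_diam_of_mem hK hk₀ hky
    _ = 2 * diam K * wordLength S ((r y)⁻¹ * r x) + 2 * diam K := by ring

theorem finite_setOf_dist_smul_le [ProperSpace X] {K : Set X}
    (hfin : {g : G | ∃ k ∈ K, g • k ∈ K}.Finite) {k₀ : X} (hk₀ : K ∈ nhds k₀) (R : ℝ) :
    {g : G | dist (g • k₀) k₀ ≤ R}.Finite := by
  obtain ⟨ρ, hρ, hball⟩ := Metric.mem_nhds_iff.1 hk₀
  -- two orbit points `ρ / 2`-close to `y` differ by an element moving `k₀` inside `K`
  have hnear : ∀ y : X, {g : G | dist (g • k₀) y < ρ / 2}.Finite := by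
    intro y
    rcases Set.eq_empty_or_nonempty {g : G | dist (g • k₀) y < ρ / 2} with he | ⟨g₀, hg₀⟩
    · simp [he]
    refine (hfin.image (g₀ * ·)).subset fun g hg =>
      ⟨g₀⁻¹ * g, ⟨k₀, mem_of_mem_nhds hk₀, hball ?_⟩, mul_inv_cancel_left g₀ g⟩
    rw [mem_ball, ← dist_smul_smul_eq_dist_inv_mul_smul]
    calc dist (g • k₀) (g₀ • k₀) ≤ dist (g • k₀) y + dist (g₀ • k₀) y := dist_triangle_right _ _ _
      _ < ρ / 2 + ρ / 2 := add_lt_add hg hg₀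
      _ = ρ := add_halves ρ
  obtain ⟨t, -, ht, hcover⟩ :=
    finite_cover_balls_of_compact (isCompact_closedBall k₀ R) (half_pos hρ)
  refine (ht.biUnion fun y _ => hnear y).subset fun g hg => ?_
  obtain ⟨y, hy, hgy⟩ := Set.mem_iUnion₂.1 (hcover (mem_closedBall.2 hg))
  exact Set.mem_biUnion hy hgy

theorem exists_finite_inv_mul_mem_of_dist_le [ProperSpace X] {K : Set X}
    (hK : Bornology.IsBounded K) (hfin : {g : G | ∃ k ∈ K, g • k ∈ K}.Finite) {k₀ : X}
    (hk₀ : K ∈ nhds k₀) {r : X → G} (hr : ∀ x, ∃ k ∈ K, r x • k = x) (R : ℝ) :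
    ∃ F : Set G, F.Finite ∧ ∀ x y, dist x y ≤ R → (r y)⁻¹ * r x ∈ F := by
  refine ⟨_, finite_setOf_dist_smul_le hfin hk₀ (R + 2 * diam K), fun x y hxy => ?_⟩
  obtain ⟨kx, hkx, hx⟩ := hr x
  obtain ⟨ky, hky, hy⟩ := hr y
  have hk₀K := mem_of_mem_nhds hk₀
  show dist (((r y)⁻¹ * r x) • k₀) k₀ ≤ R + 2 * diam K
  calc dist (((r y)⁻¹ * r x) • k₀) k₀ = dist (r x • k₀) (r y • k₀) :=
        (dist_smul_smul_eq_dist_inv_mul_smul _ _ _).symm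
    _ ≤ dist x y + dist k₀ kx + dist ky k₀ := by
        simpa only [hx, hy] using dist_smul_smul_le (r x) (r y) k₀ k₀ kx ky
    _ ≤ R + diam K + diam K := by
        gcongr
        exacts [dist_le_diam_of_mem hK hk₀K hkx, dist_le_diam_of_mem hK hky hk₀K]
    _ = R + 2 * diam K := by ring

end IsometricAction

section CoarseChains

variable {X : Type*} [PseudoMetricSpace X] {f : X → X → ℝ} {M : ℝ}

theorem le_mul_of_chain (htri : ∀ x y z, f x z ≤ f x y + f y z) (hself : ∀ x, f x x ≤ 0)
    (hstep : ∀ x y, dist x y ≤ 1 → f x y ≤ M) (p : ℕ → X) (n : ℕ)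
    (hp : ∀ i < n, dist (p i) (p (i + 1)) ≤ 1) : f (p 0) (p n) ≤ n * M := by
  induction n with
  | zero => simpa using hself (p 0)
  | succ n ih =>
    calc f (p 0) (p (n + 1)) ≤ f (p 0) (p n) + f (p n) (p (n + 1)) := htri _ _ _
      _ ≤ n * M + M :=
          add_le_add (ih fun i hi => hp i (by omega)) (hstep _ _ (hp n n.lt_succ_self))
      _ = (n + 1 : ℕ) * M := by push_cast; ring

theorem le_mul_dist_add_one_of_isometry (htri : ∀ x y z, f x z ≤ f x y + f y z)
    (hself : ∀ x, f x x ≤ 0) (hstep : ∀ x y, dist x y ≤ 1 → f x y ≤ M) (hM : 0 ≤ M)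
    {φ : ℝ → X} (hφ : Isometry φ) (s t : ℝ) : f (φ s) (φ t) ≤ M * (dist s t + 1) := by
  rcases eq_or_ne s t with rfl | hst
  · exact (hself _).trans (by positivity)
  set n := ⌈dist s t⌉₊
  have hn : (0 : ℝ) < n := Nat.cast_pos.2 (Nat.ceil_pos.2 (dist_pos.2 hst))
  have hchain := le_mul_of_chain htri hself hstep (fun i => φ (s + i * (t - s) / n)) n
    (fun i _ => by
      rw [hφ.dist_eq, dist_comm, Real.dist_eq]
      push_cast
      rw [show s + (i + 1) * (t - s) / n - (s + i * (t - s) / n) = (t - s) / n by ring,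
        abs_div, abs_of_pos hn, div_le_one hn, abs_sub_comm, ← Real.dist_eq]
      exact Nat.le_ceil _)
  simp only [Nat.cast_zero, zero_mul, zero_div, add_zero] at hchain
  rw [mul_div_cancel_left₀ _ hn.ne', add_sub_cancel] at hchain
  calc f (φ s) (φ t) ≤ n * M := hchain
    _ ≤ (dist s t + 1) * M := by gcongr; exact (Nat.ceil_lt_add_one dist_nonneg).le
    _ = M * (dist s t + 1) := mul_comm _ _

end CoarseChains

namespace UpperHalfPlane

noncomputable def verticalGeodesic (a t : ℝ) : ℍ :=
  mk ⟨a, exp t⟩ (exp_pos t)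

theorem isometry_verticalGeodesic (a : ℝ) : Isometry (verticalGeodesic a) :=
  Isometry.of_dist_eq fun s t => by
    rw [UpperHalfPlane.dist_of_re_eq (z := verticalGeodesic a s) (w := verticalGeodesic a t) rfl]
    simp [verticalGeodesic]

theorem verticalGeodesic_re_log_im (z : ℍ) : verticalGeodesic z.re (log z.im) = z :=
  UpperHalfPlane.ext (Complex.ext rfl (exp_log z.im_pos))

theorem dist_verticalGeodesic_le_one {a b t : ℝ} (h : |a - b| ≤ exp t) :
    dist (verticalGeodesic a t) (verticalGeodesic b t) ≤ 1 := by
  refine (dist_le_dist_coe_div_sqrt _ _).trans ?_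
  have hcoe : dist (verticalGeodesic a t : ℂ) (verticalGeodesic b t) = |a - b| := by
    simp [verticalGeodesic, Complex.dist_eq_re_im, Real.sqrt_sq_eq_abs]
  rw [hcoe, div_le_one (by positivity)]
  simpa [verticalGeodesic, ← sq, Real.sqrt_sq (exp_pos t).le] using h

theorem two_mul_log_le_log_add_log_add_dist (x y : ℍ) :
    2 * log (|x.re - y.re| + x.im + y.im) ≤ log x.im + log y.im + dist x y + 2 := by
  have hx := x.im_pos
  have hy := y.im_pos
  have hcosh : 2 * x.im * y.im * cosh (dist x y) = (x.re - y.re) ^ 2 + x.im ^ 2 + y.im ^ 2 := by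
    rw [cosh_dist, Complex.dist_eq_re_im, Real.sq_sqrt (by positivity)]
    field_simp
    simp only [coe_re, coe_im]
    ring
  have hcosh_le : cosh (dist x y) ≤ exp (dist x y) := by
    rw [cosh_eq]
    linarith [exp_le_exp.2 (neg_le_self (dist_nonneg (x := x) (y := y)))]
  have hexp : 6 ≤ exp 2 := by
    have := exp_one_gt_d9
    rw [show (2 : ℝ) = 1 + 1 by norm_num, exp_add]
    nlinarith
  have hsq : (|x.re - y.re| + x.im + y.im) ^ 2 ≤ x.im * y.im * exp (dist x y + 2) :=
    calc (|x.re - y.re| + x.im + y.im) ^ 2 ≤ 3 * ((x.re - y.re) ^ 2 + x.im ^ 2 + y.im ^ 2) := by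
          nlinarith [sq_abs (x.re - y.re), sq_nonneg (|x.re - y.re| - x.im),
            sq_nonneg (x.im - y.im), sq_nonneg (|x.re - y.re| - y.im)]
      _ = 6 * (x.im * y.im) * cosh (dist x y) := by rw [← hcosh]; ring
      _ ≤ exp 2 * (x.im * y.im) * exp (dist x y) := by gcongr
      _ = x.im * y.im * exp (dist x y + 2) := by rw [exp_add]; ring
  have := log_le_log (by positivity) hsq
  rwa [log_pow, log_mul (by positivity) (exp_pos _).ne', log_mul hx.ne' hy.ne', log_exp,
    Nat.cast_ofNat, ← add_assoc] at this

theorem le_mul_dist_add_five {f : ℍ → ℍ → ℝ} {M : ℝ} (htri : ∀ x y z, f x z ≤ f x y + f y z)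
    (hself : ∀ x, f x x ≤ 0) (hstep : ∀ x y, dist x y ≤ 1 → f x y ≤ M) (hM : 0 ≤ M) (x y : ℍ) :
    f x y ≤ M * (dist x y + 5) := by
  have hkey := two_mul_log_le_log_add_log_add_dist x y
  have hx := x.im_pos
  have hy := y.im_pos
  have hΔ := abs_nonneg (x.re - y.re)
  set h := |x.re - y.re| + x.im + y.im
  have hxh : log x.im ≤ log h := log_le_log hx (by linarith)
  have hyh : log y.im ≤ log h := log_le_log hy (by linarith)
  have hup := le_mul_dist_add_one_of_isometry htri hself hstep hM (isometry_verticalGeodesic x.re)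
    (log x.im) (log h)
  have hdown := le_mul_dist_add_one_of_isometry htri hself hstep hM
    (isometry_verticalGeodesic y.re) (log h) (log y.im)
  have hacross := hstep _ _ (dist_verticalGeodesic_le_one (a := x.re) (b := y.re) (t := log h)
    (by rw [exp_log (by linarith)]; linarith))
  rw [verticalGeodesic_re_log_im] at hup hdown
  rw [Real.dist_eq, abs_of_nonpos (by linarith)] at hup
  rw [Real.dist_eq, abs_of_nonneg (by linarith)] at hdown
  calc f x y ≤ f x (verticalGeodesic x.re (log h))
        + f (verticalGeodesic x.re (log h)) (verticalGeodesic y.re (log h))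
        + f (verticalGeodesic y.re (log h)) y :=
        by linarith [htri x (verticalGeodesic x.re (log h)) y,
          htri (verticalGeodesic x.re (log h)) (verticalGeodesic y.re (log h)) y]
    _ ≤ M * (2 * log h - log x.im - log y.im + 3) := by nlinarith
    _ ≤ M * (dist x y + 5) := mul_le_mul_of_nonneg_left (by linarith) hM

end UpperHalfPlane

theorem word_metric_quasi_isometry_general
    (Γ : Subgroup (Matrix.SpecialLinearGroup (Fin 2) ℝ))
    (K : Set UpperHalfPlane) (hK : IsCompact K)
    (S : Set Γ)
    (hS : S = {γ : Γ | ∃ k ∈ K, (γ : Matrix.SpecialLinearGroup (Fin 2) ℝ) • k ∈ K})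
    (hfin : S.Finite) (hgen : Subgroup.closure S = ⊤)
    (r : UpperHalfPlane → Γ)
    (hr : ∀ x : UpperHalfPlane, ∃ k ∈ K,
      ((r x : Γ) : Matrix.SpecialLinearGroup (Fin 2) ℝ) • k = x) :
    ∃ lam C : ℝ, 1 ≤ lam ∧ 0 ≤ C ∧ ∀ x y : UpperHalfPlane,
      (wordLength S ((r y)⁻¹ * r x) : ℝ) / lam - C ≤ dist x y ∧
        dist x y ≤ lam * (wordLength S ((r y)⁻¹ * r x) : ℝ) + C := by
  replace hS : S = {γ : Γ | ∃ k ∈ K, γ • k ∈ K} := hS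
  replace hr : ∀ x, ∃ k ∈ K, r x • k = x := hr
  have hsym : ∀ s ∈ S, s⁻¹ ∈ S := fun s hs => by
    rw [hS] at hs ⊢
    exact exists_inv_smul_mem hs
  have : Countable Γ := countable_of_closure_eq_top hfin.countable hsym hgen
  obtain ⟨k₀, hk₀⟩ := nonempty_interior_of_forall_exists_smul_eq hK.isClosed fun x => ⟨r x, hr x⟩
  obtain ⟨F, hF, hrF⟩ := exists_finite_inv_mul_mem_of_dist_le hK.isBounded (hS ▸ hfin)
    (mem_interior_iff_mem_nhds.1 hk₀) hr 1
  obtain ⟨M, hM⟩ := (hF.image (wordLength S)).bddAbove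
  have hlower : ∀ x y, (wordLength S ((r y)⁻¹ * r x) : ℝ) ≤ M * (dist x y + 5) :=
    UpperHalfPlane.le_mul_dist_add_five
      (fun x y z => by
        rw [show (r z)⁻¹ * r x = ((r z)⁻¹ * r y) * ((r y)⁻¹ * r x) by group, add_comm]
        exact_mod_cast wordLength_mul_le hsym hgen _ _)
      (fun x => by simp [wordLength_one])
      (fun x y hxy => by exact_mod_cast hM ⟨_, hrF x y hxy, rfl⟩) M.cast_nonneg
  have hupper := dist_le_two_mul_diam_mul_wordLength_add hK.isBounded
    (fun s hs => by rwa [hS] at hs) hsym hgen (interior_subset hk₀) hr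
  have hD : 0 ≤ diam K := diam_nonneg
  refine ⟨M + 2 * diam K + 1, 5 * M + 2 * diam K, le_add_of_nonneg_left (by positivity),
    by positivity, fun x y => ?_⟩
  constructor
  · rw [sub_le_iff_le_add, div_le_iff₀ (by positivity)]
    nlinarith [hlower x y, dist_nonneg (x := x) (y := y)]
  · nlinarith [hupper x y]

theorem word_metric_quasi_isometry
    (Γ : Subgroup (Matrix.SpecialLinearGroup (Fin 2) ℝ))
    (K : Set UpperHalfPlane) (hK : IsCompact K)
    (hcover : ∀ x : UpperHalfPlane, ∃ γ : Γ, ∃ k ∈ K,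
      (γ : Matrix.SpecialLinearGroup (Fin 2) ℝ) • k = x)
    (S : Set Γ)
    (hS : S = {γ : Γ | ∃ k ∈ K, (γ : Matrix.SpecialLinearGroup (Fin 2) ℝ) • k ∈ K})
    (hfin : S.Finite) (hgen : Subgroup.closure S = ⊤)
    (r : UpperHalfPlane → Γ)
    (hr : ∀ x : UpperHalfPlane, ∃ k ∈ K,
      ((r x : Γ) : Matrix.SpecialLinearGroup (Fin 2) ℝ) • k = x) :
    ∃ lam C : ℝ, 1 ≤ lam ∧ 0 ≤ C ∧ ∀ x y : UpperHalfPlane,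
      (wordLength S ((r y)⁻¹ * r x) : ℝ) / lam - C ≤ dist x y ∧
        dist x y ≤ lam * (wordLength S ((r y)⁻¹ * r x) : ℝ) + C :=
  word_metric_quasi_isometry_general Γ K hK S hS hfin hgen r hr
end
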